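/- Let φ : G → G' be a half-isomorphism of groups. Then A = {a ∈ G : φ(ax) = φ(a)φ(x) for all x ∈ G} is a subgroup of G. -/

import Mathlib

/-! The condition defining `A` is closed under products by associativity, and under inverses
because `φ (a * (a⁻¹ * x)) = φ a * φ (a⁻¹ * x)` can be solved for `φ (a⁻¹ * x)`. The only
input from the half-homomorphism property is that `φ` preserves `1` and inverses. -/

def IsHalfHom {G G' : Type*} [Mul G] [Mul G'] (φ : G → G') : Prop :=
  ∀ x y : G, φ (x * y) = φ x * φ y ∨ φ (x * y) = φ y * φ x

namespace IsHalfHom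

theorem map_one {G G' : Type*} [MulOneClass G] [LeftCancelMonoid G'] {φ : G → G'}
    (hφ : IsHalfHom φ) : φ 1 = 1 := by
  have h : φ 1 = φ 1 * φ 1 := by
    rcases hφ 1 1 with h | h <;> rwa [one_mul] at h
  exact mul_eq_left.mp h.symm

variable {G G' : Type*} [Group G] [Group G'] {φ : G → G'}

theorem map_inv (hφ : IsHalfHom φ) (a : G) : φ a⁻¹ = (φ a)⁻¹ := by
  rcases hφ a a⁻¹ with h | h <;> rw [mul_inv_cancel, hφ.map_one] at h
  · exact eq_inv_of_mul_eq_one_right h.symm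
  · exact eq_inv_of_mul_eq_one_left h.symm

def leftMulSubgroup (hφ : IsHalfHom φ) : Subgroup G where
  carrier := {a | ∀ x, φ (a * x) = φ a * φ x}
  one_mem' x := by rw [one_mul, hφ.map_one, one_mul]
  mul_mem' {a b} ha hb x := by rw [mul_assoc, ha, hb, ← mul_assoc, ← ha]
  inv_mem' {a} ha x := by
    have h : φ x = φ a * φ (a⁻¹ * x) := by rw [← ha, mul_inv_cancel_left]
    rw [hφ.map_inv, eq_inv_mul_iff_mul_eq, ← h]

end IsHalfHom

theorem stmt_8_general {G G' : Type*} [Group G] [Group G'] (φ : G → G')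
    (hhalf : ∀ x y : G, φ (x * y) = φ x * φ y ∨ φ (x * y) = φ y * φ x) :
    ∃ A : Subgroup G, (A : Set G) = {a : G | ∀ x : G, φ (a * x) = φ a * φ x} :=
  ⟨IsHalfHom.leftMulSubgroup hhalf, rfl⟩

theorem stmt_8 {G G' : Type*} [Group G] [Group G'] (φ : G → G')
    (hbij : Function.Bijective φ)
    (hhalf : ∀ x y : G, φ (x * y) = φ x * φ y ∨ φ (x * y) = φ y * φ x) :
    ∃ A : Subgroup G, (A : Set G) = {a : G | ∀ x : G, φ (a * x) = φ a * φ x} :=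
  stmt_8_general φ hhalf
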